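/- For every real number x > 0, the integral ∫_x^∞ e^{-t}/t dt equals -γ - log x - ∑_{k=1}^∞ (-x)^k / (k · k!), where γ is the Euler–Mascheroni constant; that is, the integral definition of the exponential integral E₁ on the positive real axis agrees with its series expansion. -/

import Mathlib

/-!
Since `Γ'(1) = -γ`, the integral `∫₀^∞ log t · e^{-t} dt` equals `-γ`. Split it at `x` and
integrate by parts on both pieces, against the antiderivative `-e^{-t}` of `e^{-t}` on `(x, ∞)`
and against `1 - e^{-t}` on `(0, x]`, which makes the boundary term at `0` vanish. The boundary
terms at `x` add up to `log x`, the piece on `(x, ∞)` becomes `E₁(x)`, and the piece on `(0, x]`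
becomes `-∫₀^x (1 - e^{-t})/t dt`, which is integrated term by term using the exponential series.
-/

open MeasureTheory Set Filter Topology Real intervalIntegral
open scoped Nat

lemma abs_log_le_two_mul_rpow_add_self {t : ℝ} (ht : 0 < t) :
    |log t| ≤ 2 * t ^ (-(1 / 2) : ℝ) + t := by
  have hrpow : 0 < t ^ (-(1 / 2) : ℝ) := rpow_pos_of_pos ht _
  rcases le_total 1 t with h1 | h1
  · rw [abs_of_nonneg (log_nonneg h1)]
    linarith [log_le_self ht.le]
  · rw [abs_of_nonpos (log_nonpos ht.le h1), ← log_inv]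
    have := log_le_rpow_div (inv_nonneg.2 ht.le) (by norm_num : (0 : ℝ) < 1 / 2)
    rw [inv_rpow ht.le, ← rpow_neg ht.le] at this
    linarith

lemma integrableOn_log_mul_exp_neg : IntegrableOn (fun t => log t * exp (-t)) (Ioi 0) := by
  have hbound : IntegrableOn
      (fun t => 2 * (exp (-t) * t ^ ((1 / 2 : ℝ) - 1)) + exp (-t) * t ^ ((2 : ℝ) - 1)) (Ioi 0) :=
    ((GammaIntegral_convergent (by norm_num)).const_mul 2).add
      (GammaIntegral_convergent (by norm_num))
  refine hbound.mono' ?_ ?_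
  · exact (by fun_prop : Measurable fun t => log t * exp (-t)).aestronglyMeasurable
  · filter_upwards [ae_restrict_mem measurableSet_Ioi] with t (ht : 0 < t)
    rw [norm_mul, norm_of_nonneg (exp_pos _).le, Real.norm_eq_abs]
    have := mul_le_mul_of_nonneg_right (abs_log_le_two_mul_rpow_add_self ht) (exp_pos (-t)).le
    norm_num [rpow_one] at this ⊢
    linarith

lemma integral_log_mul_exp_neg : ∫ t in Ioi 0, log t * exp (-t) = -eulerMascheroniConstant := by
  have hGamma : HasDerivAt Complex.GammaIntegral (-(eulerMascheroniConstant : ℂ)) 1 := by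
    refine Complex.hasDerivAt_Gamma_one.congr_of_eventuallyEq ?_
    filter_upwards [Complex.continuous_re.isOpen_preimage _ isOpen_Ioi |>.mem_nhds
      (by norm_num : (1 : ℂ).re ∈ Ioi 0)] with s hs
    exact (Complex.Gamma_eq_integral hs).symm
  have := hGamma.unique (Complex.hasDerivAt_GammaIntegral (by norm_num))
  simp only [sub_self, Complex.cpow_zero, one_mul, ← Complex.ofReal_mul, integral_complex_ofReal]
    at this
  exact_mod_cast this.symm

lemma integrableOn_exp_neg_div {x : ℝ} (hx : 0 < x) :
    IntegrableOn (fun t => exp (-t) / t) (Ioi x) := by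
  refine ((exp_neg_integrableOn_Ioi x one_pos).const_mul x⁻¹).mono' ?_ ?_
  · exact (by fun_prop : Measurable fun t => exp (-t) / t).aestronglyMeasurable
  · filter_upwards [ae_restrict_mem measurableSet_Ioi] with t (ht : x < t)
    rw [norm_of_nonneg (div_nonneg (exp_pos _).le (hx.trans ht).le), neg_one_mul, div_eq_mul_inv,
      mul_comm]
    gcongr

lemma tendsto_exp_neg_mul_log_atTop : Tendsto (fun t => exp (-t) * log t) atTop (𝓝 0) := by
  refine squeeze_zero' ?_ ?_ (by simpa using tendsto_pow_mul_exp_neg_atTop_nhds_zero 1)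
  · filter_upwards [eventually_ge_atTop 1] with t ht
    exact mul_nonneg (exp_pos _).le (log_nonneg ht)
  · filter_upwards [eventually_ge_atTop 1] with t ht
    rw [mul_comm]
    exact mul_le_mul_of_nonneg_right (log_le_self (by linarith)) (exp_pos _).le

lemma integral_Ioi_log_mul_exp_neg {x : ℝ} (hx : 0 < x) :
    ∫ t in Ioi x, log t * exp (-t) = exp (-x) * log x + ∫ t in Ioi x, exp (-t) / t := by
  have hint := integrableOn_log_mul_exp_neg.mono_set (Ioi_subset_Ioi hx.le)
  have hderiv : ∀ t ∈ Ici x, HasDerivAt (fun t => -(exp (-t) * log t))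
      (log t * exp (-t) - exp (-t) / t) t := by
    intro t ht
    refine (((hasDerivAt_neg t).exp).mul (hasDerivAt_log (hx.trans_le ht).ne')).neg.congr_deriv ?_
    ring
  have := integral_Ioi_of_hasDerivAt_of_tendsto' hderiv (hint.sub (integrableOn_exp_neg_div hx))
    (by simpa using tendsto_exp_neg_mul_log_atTop.neg)
  rw [integral_sub hint (integrableOn_exp_neg_div hx)] at this
  linarith

lemma one_sub_exp_neg_mem_Icc {t : ℝ} (ht : 0 ≤ t) : 1 - exp (-t) ∈ Icc 0 t :=
  ⟨sub_nonneg.2 (exp_le_one_iff.2 (neg_nonpos.2 ht)), by linarith [add_one_le_exp (-t)]⟩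

lemma intervalIntegrable_one_sub_exp_neg_div {x : ℝ} (hx : 0 ≤ x) :
    IntervalIntegrable (fun t => (1 - exp (-t)) / t) volume 0 x := by
  refine (intervalIntegrable_const (c := (1 : ℝ))).mono_fun' ?_ ?_
  · exact (by fun_prop : Measurable fun t => (1 - exp (-t)) / t).aestronglyMeasurable
  · rw [uIoc_of_le hx]
    filter_upwards [ae_restrict_mem measurableSet_Ioc] with t ht
    obtain ⟨h0, hle⟩ := one_sub_exp_neg_mem_Icc ht.1.le
    rw [norm_of_nonneg (div_nonneg h0 ht.1.le)]
    exact div_le_one_of_le₀ hle ht.1.le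

lemma tendsto_one_sub_exp_neg_mul_log_nhdsGT_zero :
    Tendsto (fun t => (1 - exp (-t)) * log t) (𝓝[>] 0) (𝓝 0) := by
  have hmul_log : Tendsto (fun t => ‖t * log t‖) (𝓝[>] 0) (𝓝 0) := by
    simpa using (continuous_mul_log.norm.tendsto 0).mono_left nhdsWithin_le_nhds
  refine squeeze_zero_norm' ?_ hmul_log
  filter_upwards [self_mem_nhdsWithin] with t (ht : 0 < t)
  obtain ⟨h0, hle⟩ := one_sub_exp_neg_mem_Icc ht.le
  rw [norm_mul, norm_mul, norm_of_nonneg h0, norm_of_nonneg ht.le]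
  gcongr

lemma intervalIntegral_log_mul_exp_neg {x : ℝ} (hx : 0 < x) :
    ∫ t in 0..x, log t * exp (-t) = (1 - exp (-x)) * log x - ∫ t in 0..x, (1 - exp (-t)) / t := by
  have hlog : IntervalIntegrable (fun t => log t * exp (-t)) volume 0 x :=
    (intervalIntegrable_iff_integrableOn_Ioc_of_le hx.le).2
      (integrableOn_log_mul_exp_neg.mono_set Ioc_subset_Ioi_self)
  have hderiv : ∀ t ∈ Ioo 0 x, HasDerivAt (fun t => (1 - exp (-t)) * log t)
      (log t * exp (-t) + (1 - exp (-t)) / t) t := by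
    intro t ht
    refine (((hasDerivAt_neg t).exp).const_sub 1 |>.mul (hasDerivAt_log ht.1.ne')).congr_deriv ?_
    ring
  have hcont : ContinuousAt (fun t => (1 - exp (-t)) * log t) x := by
    fun_prop (disch := exact hx.ne')
  have := integral_eq_sub_of_hasDerivAt_of_tendsto hx hderiv
    (hlog.add (intervalIntegrable_one_sub_exp_neg_div hx.le))
    tendsto_one_sub_exp_neg_mul_log_nhdsGT_zero hcont.continuousWithinAt
  rw [integral_add hlog (intervalIntegrable_one_sub_exp_neg_div hx.le)] at this
  linarith

lemma hasSum_one_sub_exp_neg_div {t : ℝ} (ht : t ≠ 0) :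
    HasSum (fun k : ℕ => (-t) ^ k / (k + 1)!) ((1 - exp (-t)) / t) := by
  have hexp := (hasSum_nat_add_iff' 1).2 (NormedSpace.expSeries_div_hasSum_exp (-t))
  have hterm (k : ℕ) : (-t) ^ (k + 1) / (k + 1)! / (-t) = (-t) ^ k / (k + 1)! := by
    rw [pow_succ]
    field_simp
  have hval : (exp (-t) - ∑ k ∈ Finset.range 1, (-t) ^ k / k !) / (-t) = (1 - exp (-t)) / t := by
    simp only [Finset.range_one, Finset.sum_singleton, pow_zero, Nat.factorial_zero, Nat.cast_one,
      div_one]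
    field_simp
    ring
  rw [← exp_eq_exp_ℝ] at hexp
  simpa only [hterm, hval] using hexp.div_const (-t)

lemma integral_neg_pow_div_factorial (x : ℝ) (k : ℕ) :
    ∫ t in 0..x, (-t) ^ k / (k + 1)! = -((-x) ^ (k + 1) / ((k + 1) * (k + 1)!)) := by
  rw [intervalIntegral.integral_div, integral_comp_neg (fun t => t ^ k), integral_pow]
  field_simp
  simp

lemma hasSum_intervalIntegral_one_sub_exp_neg_div (x : ℝ) :
    HasSum (fun k : ℕ => (-x) ^ (k + 1) / ((k + 1) * (k + 1)!))
      (-∫ t in 0..x, (1 - exp (-t)) / t) := by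
  have hsum := hasSum_integral_of_dominated_convergence (μ := volume) (a := 0) (b := x)
    (F := fun (k : ℕ) (t : ℝ) => (-t) ^ k / (k + 1)!) (f := fun t => (1 - exp (-t)) / t)
    (fun k _ => |x| ^ k / k !)
    (fun k => (by fun_prop : Continuous fun t : ℝ => (-t) ^ k / (k + 1)!).aestronglyMeasurable)
    ?_ (ae_of_all _ fun _ _ => summable_pow_div_factorial |x|) intervalIntegrable_const ?_
  · simpa only [integral_neg_pow_div_factorial, neg_neg] using hsum.neg
  · refine fun k => ae_of_all _ fun t ht => ?_
    have habs : |t| ≤ |x| := by simpa using abs_sub_left_of_mem_uIcc (uIoc_subset_uIcc ht)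
    have hfac : (k ! : ℝ) ≤ (k + 1)! := by exact_mod_cast Nat.factorial_le k.le_succ
    rw [norm_div, norm_pow, norm_neg, Real.norm_eq_abs, norm_of_nonneg (by positivity)]
    gcongr
  · filter_upwards [Measure.ae_ne volume 0] with t ht _
    exact hasSum_one_sub_exp_neg_div ht

/-- For real `x > 0`, the integral `∫_x^∞ e^{-t}/t dt` equals the series expansion
`-γ - log x - ∑_{k=1}^∞ (-x)^k / (k·k!)` of the exponential integral `E₁`. -/
theorem expIntegral_eq_series (x : ℝ) (hx : 0 < x) :
    ∫ t in Set.Ioi x, Real.exp (-t) / t =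
      -Real.eulerMascheroniConstant - Real.log x -
        ∑' k : ℕ, (-x) ^ (k + 1) / (((k + 1) * Nat.factorial (k + 1) : ℕ) : ℝ) := by
  have hsplit := integral_interval_add_Ioi integrableOn_log_mul_exp_neg
    (integrableOn_log_mul_exp_neg.mono_set (Ioi_subset_Ioi hx.le))
  rw [integral_log_mul_exp_neg, intervalIntegral_log_mul_exp_neg hx,
    integral_Ioi_log_mul_exp_neg hx] at hsplit
  have hseries : ∑' k : ℕ, (-x) ^ (k + 1) / (((k + 1) * Nat.factorial (k + 1) : ℕ) : ℝ) =
      -∫ t in 0..x, (1 - exp (-t)) / t := by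
    push_cast
    exact (hasSum_intervalIntegral_one_sub_exp_neg_div x).tsum_eq
  rw [hseries]
  linear_combination hsplit
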